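/- arXiv:1604.05023 — 2 statements merged into one kernel-verified Lean document; each statement's English description precedes it below -/
import Mathlib

section
/- There exists a function f, defined on pairs (integer, augmented truncated view), such that for every integer x ≥ 1 and every feasible port-numbered graph G of diameter D and election index φ with φ ≤ x, the assignment v ↦ f(x, B^{D+x+1}(v)) is a leader election output for G. That is, given any upper bound x on the election index as sole input, leader election can be performed in time at most D + x + 1 without any further advice. -/
namespace Election

/-- A port-numbered graph: a simple undirected connected graph on `n ≥ 3` unlabeled nodes
(vertex set `Fin n`) in which, at each node `v` of degree `d`, the edges incident to `v`
carry distinct port numbers `0, …, d-1` at `v`. `portNum v u` is the port number at `v`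
of the edge `{v, u}` (meaningful only when `v` and `u` are adjacent). -/
structure PortGraph where
  n : ℕ
  three_le : 3 ≤ n
  G : SimpleGraph (Fin n)
  conn : G.Connected
  portNum : Fin n → Fin n → ℕ
  port_lt : ∀ v u : Fin n, G.Adj v u → portNum v u < Nat.card {w : Fin n // G.Adj v w}
  port_inj : ∀ v u w : Fin n, G.Adj v u → G.Adj v w → portNum v u = portNum v w → u = w

namespace PortGraph

/-- The degree of a node. -/
noncomputable def degree (PG : PortGraph) (v : Fin PG.n) : ℕ :=
  Nat.card {w : Fin PG.n // PG.G.Adj v w}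

open Classical in
/-- The neighbor of `v` reached through port `p` (junk value `v` if there is none). -/
noncomputable def nbr (PG : PortGraph) (v : Fin PG.n) (p : ℕ) : Fin PG.n :=
  if h : ∃ u : Fin PG.n, PG.G.Adj v u ∧ PG.portNum v u = p then h.choose else v

/-- Abstract (augmented truncated) views: a view at depth `0` is a leaf carrying a degree;
a view at depth `ℓ+1` is a node whose children are listed in the order of the port numbers
`0, …, d-1` at the root, each child carrying the port number at the other endpoint of the
corresponding edge together with the subview at depth `ℓ`. -/
inductive AugView : Type
  | leaf (deg : ℕ) : AugView
  | node (children : List (ℕ × AugView)) : AugView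

/-- The augmented truncated view `B^ℓ(v)` of node `v` at depth `ℓ`. -/
noncomputable def augView (PG : PortGraph) : ℕ → Fin PG.n → AugView
  | 0, v => AugView.leaf (PG.degree v)
  | (ℓ + 1), v => AugView.node ((List.range (PG.degree v)).map
      fun p => (PG.portNum (PG.nbr v p) v, PG.augView ℓ (PG.nbr v p)))

/-- `IsPath PG v s vs` means: the sequence `s = (p₁, q₁, …, p_k, q_k)` of port numbers codes
a path in `PG` starting at `v` whose i-th edge carries port `p_i` at the endpoint closer to
`v` and `q_i` at the other endpoint, and `vs` is the list of visited vertices (from `v` on). -/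
inductive IsPath (PG : PortGraph) : Fin PG.n → List ℕ → List (Fin PG.n) → Prop
  | nil (v : Fin PG.n) : IsPath PG v [] [v]
  | cons (v u : Fin PG.n) (p q : ℕ) (rest : List ℕ) (vs : List (Fin PG.n))
      (hadj : PG.G.Adj v u) (hp : PG.portNum v u = p) (hq : PG.portNum u v = q)
      (htail : IsPath PG u rest vs) : IsPath PG v (p :: q :: rest) (v :: vs)

/-- `P` is a leader election output for `PG`: every node `v` outputs a sequence of port
numbers coding a simple path starting at `v`, and all these paths end at a common node. -/
def IsLeaderElection (PG : PortGraph) (P : Fin PG.n → List ℕ) : Prop :=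
  ∃ leader : Fin PG.n, ∀ v : Fin PG.n, ∃ vs : List (Fin PG.n),
    PG.IsPath v (P v) vs ∧ vs.Nodup ∧ vs.getLast? = some leader

/-- A graph is feasible if at some depth all augmented truncated views are pairwise distinct. -/
def Feasible (PG : PortGraph) : Prop :=
  ∃ ℓ : ℕ, Function.Injective (PG.augView ℓ)

/-- The election index: the smallest depth at which all augmented truncated views are distinct. -/
noncomputable def electionIndex (PG : PortGraph) : ℕ :=
  sInf {ℓ : ℕ | Function.Injective (PG.augView ℓ)}

/-- The diameter: the maximum distance between two nodes. -/
noncomputable def diam (PG : PortGraph) : ℕ :=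
  sSup (Set.range fun p : Fin PG.n × Fin PG.n => PG.G.dist p.1 p.2)

end PortGraph

noncomputable section
open Classical

namespace PortGraph

variable (PG : PortGraph)

lemma degree_pos (v : Fin PG.n) : 0 < PG.degree v := by
  have hnt : Nontrivial (Fin PG.n) :=
    Fin.nontrivial_iff_two_le.mpr (by have := PG.three_le; omega)
  obtain ⟨w, hw⟩ := exists_ne v
  obtain ⟨p⟩ := PG.conn.preconnected v w
  have hne : ∃ u, PG.G.Adj v u := by
    cases p with
    | nil => exact absurd rfl hw
    | cons h q => exact ⟨_, h⟩
  have : Nonempty {u : Fin PG.n // PG.G.Adj v u} := ⟨⟨hne.choose, hne.choose_spec⟩⟩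
  exact Nat.card_pos

lemma exists_port (v : Fin PG.n) (p : ℕ) (hp : p < PG.degree v) :
    ∃ u, PG.G.Adj v u ∧ PG.portNum v u = p := by
  classical
  set e : {w : Fin PG.n // PG.G.Adj v w} → Fin (PG.degree v) :=
    fun w => ⟨PG.portNum v w.1, PG.port_lt v w.1 w.2⟩ with he
  have hinj : Function.Injective e := by
    intro a b hab
    have := PG.port_inj v a.1 b.1 a.2 b.2 (by simpa [he] using congrArg Fin.val hab)
    exact Subtype.ext this
  have hbij : Function.Bijective e := by
    rw [Nat.bijective_iff_injective_and_card]
    exact ⟨hinj, by simp [degree]⟩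
  obtain ⟨⟨u, hu⟩, hu2⟩ := hbij.2 ⟨p, hp⟩
  exact ⟨u, hu, by simpa using congrArg Fin.val hu2⟩

lemma nbr_spec {v : Fin PG.n} {p : ℕ} (hp : p < PG.degree v) :
    PG.G.Adj v (PG.nbr v p) ∧ PG.portNum v (PG.nbr v p) = p := by
  have h := PG.exists_port v p hp
  rw [nbr, dif_pos h]
  exact h.choose_spec

lemma nbr_port {v u : Fin PG.n} (h : PG.G.Adj v u) : PG.nbr v (PG.portNum v u) = u := by
  have hx : ∃ w, PG.G.Adj v w ∧ PG.portNum v w = PG.portNum v u := ⟨u, h, rfl⟩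
  rw [nbr, dif_pos hx]
  exact PG.port_inj v _ u hx.choose_spec.1 h hx.choose_spec.2

lemma dist_le_diam (u v : Fin PG.n) : PG.G.dist u v ≤ PG.diam :=
  le_csSup ((Set.finite_range _).bddAbove) ⟨(u, v), rfl⟩

end PortGraph
namespace PortGraph

variable (PG : PortGraph)

/-- `Valid PG ps v` : the port sequence `ps` codes a walk starting at `v`. -/
def Valid : List ℕ → Fin PG.n → Prop
  | [], _ => True
  | p :: ps, v => p < PG.degree v ∧ Valid ps (PG.nbr v p)

/-- Endpoint of the walk coded by `ps` from `v`. -/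
def walkEnd : List ℕ → Fin PG.n → Fin PG.n
  | [], v => v
  | p :: ps, v => walkEnd ps (PG.nbr v p)

/-- Vertices of the walk coded by `ps` from `v`. -/
def walkList : List ℕ → Fin PG.n → List (Fin PG.n)
  | [], v => [v]
  | p :: ps, v => v :: walkList ps (PG.nbr v p)

/-- The interleaved sequence of port pairs along the walk coded by `ps` from `v`. -/
def portSeq : List ℕ → Fin PG.n → List ℕ
  | [], _ => []
  | p :: ps, v => p :: PG.portNum (PG.nbr v p) v :: portSeq ps (PG.nbr v p)

lemma walkList_ne_nil (ps : List ℕ) (v : Fin PG.n) : PG.walkList ps v ≠ [] := by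
  cases ps <;> simp [walkList]

lemma walkList_getLast? (ps : List ℕ) (v : Fin PG.n) :
    (PG.walkList ps v).getLast? = some (PG.walkEnd ps v) := by
  induction ps generalizing v with
  | nil => simp [walkList, walkEnd]
  | cons p ps ih =>
    rw [walkList, walkEnd, List.getLast?_cons, ih]
    simp [walkList_ne_nil]

lemma isPath_of_valid (ps : List ℕ) (v : Fin PG.n) (hv : PG.Valid ps v) :
    PG.IsPath v (PG.portSeq ps v) (PG.walkList ps v) := by
  induction ps generalizing v with
  | nil => exact IsPath.nil v
  | cons p ps ih =>
    obtain ⟨hp, hv'⟩ := hv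
    have hs := PG.nbr_spec hp
    exact IsPath.cons v (PG.nbr v p) p _ _ _ hs.1 hs.2 rfl (ih _ hv')

lemma walkEnd_append (a b : List ℕ) (v : Fin PG.n) :
    PG.walkEnd (a ++ b) v = PG.walkEnd b (PG.walkEnd a v) := by
  induction a generalizing v with
  | nil => rfl
  | cons p a ih => simp [walkEnd, ih]

/-- A member of the walk list is the end of a prefix walk; the suffix stays valid. -/
lemma mem_walkList {ps : List ℕ} {v w : Fin PG.n} (hv : PG.Valid ps v)
    (hw : w ∈ PG.walkList ps v) :
    ∃ i, i ≤ ps.length ∧ PG.walkEnd (ps.take i) v = w ∧ PG.Valid (ps.drop i) w ∧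
      PG.walkEnd (ps.drop i) w = PG.walkEnd ps v := by
  induction ps generalizing v with
  | nil =>
    rw [walkList, List.mem_singleton] at hw
    subst hw
    exact ⟨0, Nat.le_refl _, rfl, hv, rfl⟩
  | cons p ps ih =>
    rw [walkList, List.mem_cons] at hw
    rcases hw with rfl | hw
    · exact ⟨0, Nat.zero_le _, rfl, hv, rfl⟩
    · obtain ⟨i, hi, h1, h2, h3⟩ := ih hv.2 hw
      exact ⟨i + 1, by simpa using hi, by simpa [walkEnd] using h1, h2,
        by simpa [walkEnd] using h3⟩

/-- If the walk revisits a vertex, there is a strictly shorter valid walk with the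
same endpoints. -/
lemma shorter_of_not_nodup {ps : List ℕ} {v : Fin PG.n} (hv : PG.Valid ps v)
    (hnd : ¬ (PG.walkList ps v).Nodup) :
    ∃ qs : List ℕ, PG.Valid qs v ∧ qs.length < ps.length ∧
      PG.walkEnd qs v = PG.walkEnd ps v := by
  induction ps generalizing v with
  | nil => simp [walkList] at hnd
  | cons p ps ih =>
    rw [walkList, List.nodup_cons] at hnd
    push_neg at hnd
    by_cases hmem : v ∈ PG.walkList ps (PG.nbr v p)
    · obtain ⟨i, hi, h1, h2, h3⟩ := PG.mem_walkList hv.2 hmem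
      refine ⟨ps.drop i, h2, ?_, by simpa [walkEnd] using h3⟩
      simp only [List.length_drop, List.length_cons]
      omega
    · obtain ⟨qs, h1, h2, h3⟩ := ih hv.2 (hnd hmem)
      exact ⟨p :: qs, ⟨hv.1, h1⟩, by simpa using h2, by simpa [walkEnd] using h3⟩

lemma exists_valid_of_walk {v u : Fin PG.n} (W : PG.G.Walk v u) :
    ∃ ps : List ℕ, PG.Valid ps v ∧ ps.length = W.length ∧ PG.walkEnd ps v = u := by
  induction W with
  | nil => exact ⟨[], trivial, rfl, rfl⟩
  | @cons a b c h W ih =>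
    obtain ⟨ps, h1, h2, h3⟩ := ih
    have hb : PG.nbr a (PG.portNum a b) = b := PG.nbr_port h
    refine ⟨PG.portNum a b :: ps, ⟨PG.port_lt a b h, ?_⟩, by simpa using h2, ?_⟩
    · rw [hb]; exact h1
    · rw [walkEnd, hb]; exact h3

/-- Any vertex is reachable by a valid walk of length at most the diameter. -/
lemma exists_valid (v u : Fin PG.n) :
    ∃ ps : List ℕ, PG.Valid ps v ∧ ps.length ≤ PG.diam ∧ PG.walkEnd ps v = u := by
  obtain ⟨W, hW⟩ := (PG.conn.preconnected v u).exists_walk_length_eq_dist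
  obtain ⟨ps, h1, h2, h3⟩ := PG.exists_valid_of_walk W
  exact ⟨ps, h1, by rw [h2, hW]; exact PG.dist_le_diam v u, h3⟩

end PortGraph
namespace PortGraph
namespace AugView

/-- Depth of a view tree along its leftmost branch. -/
def depth : AugView → ℕ
  | .leaf _ => 0
  | .node [] => 1
  | .node ((_, s) :: _) => depth s + 1

/-- Truncation of a view tree to depth `k`, relabelling new leaves with degrees. -/
def truncate : ℕ → AugView → AugView
  | 0, .leaf d => .leaf d
  | 0, .node cs => .leaf cs.length
  | _ + 1, .leaf d => .leaf d
  | k + 1, .node cs => .node (cs.map fun c => (c.1, truncate k c.2))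

/-- The subtree of a view tree at the position coded by a list of ports. -/
def subtreeAt : List ℕ → AugView → Option AugView
  | [], t => some t
  | _ :: _, .leaf _ => none
  | p :: ps, .node cs => (cs[p]?).bind fun c => subtreeAt ps c.2

/-- The interleaved port pairs read along the position coded by a list of ports. -/
def pathPairs : List ℕ → AugView → List ℕ
  | [], _ => []
  | _ :: _, .leaf _ => []
  | p :: ps, .node cs => ((cs[p]?).map fun c => p :: c.1 :: pathPairs ps c.2).getD []

end AugView

variable (PG : PortGraph)

lemma children_getElem? {v : Fin PG.n} {p : ℕ} (hp : p < PG.degree v)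
    (g : ℕ → ℕ × AugView) :
    ((List.range (PG.degree v)).map g)[p]? = some (g p) := by
  rw [List.getElem?_map, List.getElem?_range hp]
  rfl

lemma depth_augView (ℓ : ℕ) (v : Fin PG.n) : (PG.augView ℓ v).depth = ℓ := by
  induction ℓ generalizing v with
  | zero => rfl
  | succ ℓ ih =>
    obtain ⟨k, hk⟩ : ∃ k, PG.degree v = k + 1 :=
      ⟨PG.degree v - 1, by have := PG.degree_pos v; omega⟩
    rw [augView, hk, List.range_succ_eq_map, List.map_cons]
    simp [AugView.depth, ih]

lemma truncate_augView {k ℓ : ℕ} (h : k ≤ ℓ) (v : Fin PG.n) :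
    AugView.truncate k (PG.augView ℓ v) = PG.augView k v := by
  induction k generalizing ℓ v with
  | zero =>
    cases ℓ with
    | zero => rfl
    | succ m => simp [augView, AugView.truncate]
  | succ k ih =>
    obtain ⟨m, rfl⟩ : ∃ m, ℓ = m + 1 := ⟨ℓ - 1, by omega⟩
    rw [augView, AugView.truncate, augView, List.map_map]
    congr 1
    refine List.map_congr_left fun p _ => ?_
    simp [ih (by omega : k ≤ m)]

lemma subtreeAt_augView {ps : List ℕ} {ℓ : ℕ} {v : Fin PG.n}
    (hv : PG.Valid ps v) (h : ps.length ≤ ℓ) :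
    AugView.subtreeAt ps (PG.augView ℓ v) =
      some (PG.augView (ℓ - ps.length) (PG.walkEnd ps v)) := by
  induction ps generalizing ℓ v with
  | nil => simp [AugView.subtreeAt, walkEnd]
  | cons p ps ih =>
    obtain ⟨m, rfl⟩ : ∃ m, ℓ = m + 1 := ⟨ℓ - 1, by simp at h; omega⟩
    rw [augView, AugView.subtreeAt, PG.children_getElem? hv.1, Option.bind_some]
    have := ih hv.2 (by simp at h; omega : ps.length ≤ m)
    rw [this, walkEnd]
    congr 2
    simp


lemma valid_of_subtreeAt {ps : List ℕ} {ℓ : ℕ} {v : Fin PG.n} {t' : AugView}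
    (h : ps.length ≤ ℓ) (hs : AugView.subtreeAt ps (PG.augView ℓ v) = some t') :
    PG.Valid ps v := by
  induction ps generalizing ℓ v t' with
  | nil => trivial
  | cons p ps ih =>
    obtain ⟨m, rfl⟩ : ∃ m, ℓ = m + 1 := ⟨ℓ - 1, by simp at h; omega⟩
    rw [augView, AugView.subtreeAt] at hs
    by_cases hp : p < PG.degree v
    · rw [PG.children_getElem? hp, Option.bind_some] at hs
      exact ⟨hp, ih (by simp at h; omega) hs⟩
    · exfalso
      rw [List.getElem?_eq_none (by simpa using hp)] at hs
      simp at hs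

lemma pathPairs_augView {ps : List ℕ} {ℓ : ℕ} {v : Fin PG.n}
    (hv : PG.Valid ps v) (h : ps.length ≤ ℓ) :
    AugView.pathPairs ps (PG.augView ℓ v) = PG.portSeq ps v := by
  induction ps generalizing ℓ v with
  | nil => cases ℓ <;> rfl
  | cons p ps ih =>
    obtain ⟨m, rfl⟩ : ∃ m, ℓ = m + 1 := ⟨ℓ - 1, by simp at h; omega⟩
    rw [augView, AugView.pathPairs, PG.children_getElem? hv.1]
    rw [portSeq]
    simp [ih hv.2 (by simp at h; omega : ps.length ≤ m)]

lemma inj_mono {k ℓ : ℕ} (h : Function.Injective (PG.augView k)) (hk : k ≤ ℓ) :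
    Function.Injective (PG.augView ℓ) := by
  intro a b hab
  apply h
  rw [← PG.truncate_augView hk a, ← PG.truncate_augView hk b, hab]

end PortGraph
namespace PortGraph
namespace AugView

/-- A fixed well-founded relation on views, used to pick a canonical minimum. -/
noncomputable def wo : WellFounded (@WellOrderingRel AugView) := IsWellFounded.wf

/-- The set of all truncated-to-depth-`x` subviews at positions of length at most
`depth - x - 1` inside a view `t`. -/
def Sset (x : ℕ) (t : AugView) : Set AugView :=
  {s | ∃ ps : List ℕ, ps.length + x + 1 ≤ t.depth ∧
    ∃ t', subtreeAt ps t = some t' ∧ truncate x t' = s}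

/-- The canonical minimal element of `Sset x t` (the view of the leader). -/
noncomputable def leadView (x : ℕ) (t : AugView) : AugView :=
  if h : (Sset x t).Nonempty then wo.min (Sset x t) h else t

/-- Lengths of positions witnessing the leader's view. -/
def Kset (x : ℕ) (t : AugView) : Set ℕ :=
  {k | ∃ ps : List ℕ, ps.length = k ∧ k + x + 1 ≤ t.depth ∧
    ∃ t', subtreeAt ps t = some t' ∧ truncate x t' = leadView x t}

/-- A chosen position of minimal length witnessing the leader's view. -/
noncomputable def chosenPath (x : ℕ) (t : AugView) : List ℕ :=
  if h : ∃ ps : List ℕ, ps.length = sInf (Kset x t) ∧ sInf (Kset x t) + x + 1 ≤ t.depth ∧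
      ∃ t', subtreeAt ps t = some t' ∧ truncate x t' = leadView x t
  then h.choose else []

end AugView
end PortGraph

theorem generic_election' :
    ∃ f : ℕ → PortGraph.AugView → List ℕ,
      ∀ x : ℕ, 1 ≤ x → ∀ PG : PortGraph, PG.Feasible → PG.electionIndex ≤ x →
        PG.IsLeaderElection (fun v => f x (PG.augView (PG.diam + x + 1) v)) := by
  classical
  refine ⟨fun x t => PortGraph.AugView.pathPairs (PortGraph.AugView.chosenPath x t) t, ?_⟩
  intro x _hx PG hfeas hle
  open PortGraph PortGraph.AugView in
  -- injectivity at depth x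
  have hφ : Function.Injective (PG.augView PG.electionIndex) := Nat.sInf_mem hfeas
  have hinj : Function.Injective (PG.augView x) := PG.inj_mono hφ hle
  set ℓ := PG.diam + x + 1 with hℓ
  -- the candidate set is the range of depth-x views
  have hS : ∀ v : Fin PG.n, Sset x (PG.augView ℓ v) = Set.range (PG.augView x) := by
    intro v
    ext s
    constructor
    · rintro ⟨ps, hlen, t', hsub, rfl⟩
      rw [PG.depth_augView] at hlen
      have hval : PG.Valid ps v := PG.valid_of_subtreeAt (by omega) hsub
      rw [PG.subtreeAt_augView hval (by omega)] at hsub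
      obtain rfl : t' = PG.augView (ℓ - ps.length) (PG.walkEnd ps v) :=
        (Option.some_injective _ hsub).symm
      exact ⟨PG.walkEnd ps v,
        (PG.truncate_augView (show x ≤ ℓ - ps.length by omega) (PG.walkEnd ps v)).symm⟩
    · rintro ⟨u, rfl⟩
      obtain ⟨ps, hval, hlen, hend⟩ := PG.exists_valid v u
      refine ⟨ps, by rw [PG.depth_augView]; omega, _,
        PG.subtreeAt_augView hval (by omega), ?_⟩
      rw [PG.truncate_augView (by omega), hend]
  have hnev : Nonempty (Fin PG.n) := ⟨⟨0, by have := PG.three_le; omega⟩⟩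
  have hne : (Set.range (PG.augView x)).Nonempty := Set.range_nonempty _
  set m : AugView := wo.min (Set.range (PG.augView x)) hne with hm
  have hlead : ∀ v : Fin PG.n, leadView x (PG.augView ℓ v) = m := by
    intro v
    rw [leadView]
    simp only [hS v]
    rw [dif_pos hne]
  obtain ⟨u0, hu0⟩ : m ∈ Set.range (PG.augView x) :=
    wo.min_mem (Set.range (PG.augView x)) hne
  refine ⟨u0, fun v => ?_⟩
  show ∃ vs, PG.IsPath v
      (PortGraph.AugView.pathPairs (PortGraph.AugView.chosenPath x (PG.augView ℓ v))
        (PG.augView ℓ v)) vs ∧ vs.Nodup ∧ vs.getLast? = some u0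
  set t := PG.augView ℓ v with ht
  have hdep : t.depth = ℓ := PG.depth_augView ℓ v
  -- the K set is nonempty
  obtain ⟨qs, hqval, hqlen, hqend⟩ := PG.exists_valid v u0
  have hKmem : qs.length ∈ Kset x t := by
    refine ⟨qs, rfl, by rw [hdep]; omega, _,
      PG.subtreeAt_augView hqval (by omega), ?_⟩
    rw [PG.truncate_augView (by omega), hqend, hlead v, hu0]
  have hKex : ∃ ps : List ℕ, ps.length = sInf (Kset x t) ∧
      sInf (Kset x t) + x + 1 ≤ t.depth ∧
      ∃ t', subtreeAt ps t = some t' ∧ truncate x t' = leadView x t :=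
    Nat.sInf_mem (⟨qs.length, hKmem⟩ : (Kset x t).Nonempty)
  have hcp : chosenPath x t = hKex.choose := by rw [chosenPath, dif_pos hKex]
  obtain ⟨hplen, hpdep, t', hpsub, hptr⟩ := hKex.choose_spec
  set ps := hKex.choose with hps
  rw [hdep] at hpdep
  rw [← hplen] at hpdep
  have hlenD : ps.length ≤ PG.diam := by omega
  have hval : PG.Valid ps v := PG.valid_of_subtreeAt (by omega) hpsub
  rw [PG.subtreeAt_augView hval (by omega)] at hpsub
  obtain rfl : t' = PG.augView (ℓ - ps.length) (PG.walkEnd ps v) :=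
    (Option.some_injective _ hpsub).symm
  rw [PG.truncate_augView (by omega), hlead v, ← hu0] at hptr
  have hend : PG.walkEnd ps v = u0 := hinj hptr
  -- simplicity via minimality
  have hnd : (PG.walkList ps v).Nodup := by
    by_contra hnd
    obtain ⟨rs, hrval, hrlen, hrend⟩ := PG.shorter_of_not_nodup hval hnd
    have : rs.length ∈ Kset x t := by
      refine ⟨rs, rfl, by rw [hdep]; omega, _,
        PG.subtreeAt_augView hrval (by omega), ?_⟩
      rw [PG.truncate_augView (by omega), hrend, hend, hlead v, hu0]
    have h2 := Nat.sInf_le this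
    rw [← hplen] at h2
    omega
  refine ⟨PG.walkList ps v, ?_, hnd, ?_⟩
  · have h1 : pathPairs (chosenPath x t) t = PG.portSeq ps v := by
      rw [hcp, ht, PG.pathPairs_augView hval (by omega)]
    rw [h1]
    exact PG.isPath_of_valid ps v hval
  · rw [PG.walkList_getLast?, hend]
end

/-- Given any upper bound `x ≥ 1` on the election index as sole input, leader election
can be performed in time at most `D + x + 1` without any further advice. -/
theorem generic_election :
    ∃ f : ℕ → PortGraph.AugView → List ℕ,
      ∀ x : ℕ, 1 ≤ x → ∀ PG : PortGraph, PG.Feasible → PG.electionIndex ≤ x →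
        PG.IsLeaderElection (fun v => f x (PG.augView (PG.diam + x + 1) v)) :=
  generic_election'

end Election
end

section
/- For every integer b ≥ 0, there is no leader election algorithm using advice of size at most b that succeeds on all feasible port-numbered graphs, regardless of the allocated time. Precisely: there do not exist an oracle A assigning to every feasible port-numbered graph G a binary advice string with |A(G)| ≤ b, and a function f mapping pairs (binary string, augmented truncated view) to either the symbol ⊥ (meaning 'continue') or a finite sequence of port numbers, such that for every feasible port-numbered graph G: (i) for every node v of G there exists a smallest integer t_v ≥ 0 with f(A(G), B^{t_v}(v)) ≠ ⊥, and (ii) the assignment v ↦ f(A(G), B^{t_v}(v)) is a leader election output for G. -/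
/-!
By pigeonhole, one advice string is given to infinitely many members of the family `family j`:
the cycle of length `|pattern j|` whose node at position `x` carries `(pattern j)[x]` pendant
leaves. The letter `j + 1` occurs only once in `pattern j`, which makes `family j` feasible, and
`pattern j` contains `j` consecutive copies of `pattern i` for every `i < j`.

Take `i` and a much larger `j` with the same advice, and let the cycle node at position `0` of
`family i` stop at round `τ` with an output of length `K`. Cycle nodes of `family j` deep inside
the run of copies of `pattern i` have the same views up to depth `τ`, hence stop at round `τ` with
the same output. Two of them at distance `(2K + 1) * |pattern i|` along the cycle (and farther
apart the other way round) would then reach a common leader along paths of at most `K` edges each,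
which is impossible since each edge changes the position along the cycle by at most one.
-/

namespace Election

theorem first_some_unique {α : Type*} {x y : ℕ → Option α} {τ τ' : ℕ} {a a' : α}
    (hx : x τ = some a) (hx' : ∀ s < τ, x s = none)
    (hy : y τ' = some a') (hy' : ∀ s < τ', y s = none) (hxy : ∀ s ≤ τ, y s = x s) :
    τ' = τ ∧ a' = a := by
  obtain hlt | rfl | hgt := lt_trichotomy τ' τ
  · rw [hxy τ' hlt.le, hx' τ' hlt] at hy
    cases hy
  · rw [hxy τ' le_rfl, hx] at hy
    exact ⟨rfl, (Option.some.inj hy).symm⟩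
  · have := hy' τ hgt
    rw [hxy τ le_rfl, hx] at this
    cases this

theorem exists_infinite_fiber_of_length_le {α β : Type*} [Infinite α] [Finite β] {b : ℕ}
    (g : α → List β) (hg : ∀ n, (g n).length ≤ b) : ∃ l, {n | g n = l}.Infinite := by
  have : Finite {l : List β // l.length ≤ b} := (List.finite_length_le β b).to_subtype
  obtain ⟨l, hl⟩ :=
    Finite.exists_infinite_fiber fun n => (⟨g n, hg n⟩ : {l : List β // l.length ≤ b})
  refine ⟨l.1, ?_⟩
  convert Set.infinite_coe_iff.mp hl using 1
  ext n
  simp [Subtype.ext_iff]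

theorem _root_.ZMod.natCast_ne_intCast_of_natAbs_lt {N D : ℕ} {δ : ℤ} (h₁ : δ.natAbs < D)
    (h₂ : D + δ.natAbs < N) : (D : ZMod N) ≠ δ := by
  intro h
  have hdvd : (N : ℤ) ∣ D - δ := by
    rw [← ZMod.intCast_zmod_eq_zero_iff_dvd]
    push_cast
    rw [h, sub_self]
  have := Int.le_of_dvd (by omega) hdvd
  omega

namespace PortGraph

theorem augView_eq_of_bisim {PG₁ PG₂ : PortGraph} (R : ℕ → Fin PG₁.n → Fin PG₂.n → Prop)
    (hdeg : ∀ k v w, R k v w → PG₁.degree v = PG₂.degree w)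
    (hstep : ∀ k v w, R (k + 1) v w → ∀ p < PG₁.degree v,
      PG₁.portNum (PG₁.nbr v p) v = PG₂.portNum (PG₂.nbr w p) w ∧
        R k (PG₁.nbr v p) (PG₂.nbr w p)) :
    ∀ k v w, R k v w → PG₁.augView k v = PG₂.augView k w := by
  intro k
  induction k with
  | zero => intro v w h; simp only [augView, hdeg 0 v w h]
  | succ k ih =>
    intro v w h
    simp only [augView, ← hdeg _ _ _ h, AugView.node.injEq, List.map_inj_left, List.mem_range]
    intro p hp
    obtain ⟨hport, hR⟩ := hstep k v w h p hp
    rw [hport, ih _ _ hR]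

theorem nbr_portNum {PG : PortGraph} {v u : Fin PG.n} (h : PG.G.Adj v u) :
    PG.nbr v (PG.portNum v u) = u := by
  have hex : ∃ w, PG.G.Adj v w ∧ PG.portNum v w = PG.portNum v u := ⟨u, h, rfl⟩
  rw [nbr, dif_pos hex]
  exact PG.port_inj v _ u hex.choose_spec.1 h hex.choose_spec.2

theorem IsPath.exists_displacement {R : Type*} [AddCommGroupWithOne R] {PG : PortGraph}
    (pos : Fin PG.n → R)
    (hpos : ∀ v u, PG.G.Adj v u → ∃ e : ℤ, e.natAbs ≤ 1 ∧ pos u = pos v + e)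
    {v : Fin PG.n} {L : List ℕ} {vs : List (Fin PG.n)} (h : PG.IsPath v L vs) {w : Fin PG.n}
    (hw : vs.getLast? = some w) : ∃ δ : ℤ, δ.natAbs ≤ L.length ∧ pos w = pos v + δ := by
  induction h with
  | nil v =>
    obtain rfl : v = w := by simpa using hw
    exact ⟨0, by simp⟩
  | cons v u p q rest vs hadj _ _ htail ih =>
    obtain ⟨δ, hδ, hw'⟩ := ih (by cases htail <;> simpa using hw)
    obtain ⟨e, he, hu⟩ := hpos v u hadj
    refine ⟨e + δ, by simp only [List.length_cons]; omega, ?_⟩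
    rw [hw', hu, Int.cast_add, add_assoc]

theorem IsLeaderElection.exists_sub_eq {R : Type*} [AddCommGroupWithOne R] {PG : PortGraph}
    (pos : Fin PG.n → R)
    (hpos : ∀ v u, PG.G.Adj v u → ∃ e : ℤ, e.natAbs ≤ 1 ∧ pos u = pos v + e)
    {P : Fin PG.n → List ℕ} (hP : PG.IsLeaderElection P) (u₁ u₂ : Fin PG.n) :
    ∃ δ : ℤ, δ.natAbs ≤ (P u₁).length + (P u₂).length ∧ pos u₁ - pos u₂ = δ := by
  obtain ⟨leader, hleader⟩ := hP
  obtain ⟨vs₁, hpath₁, -, hlast₁⟩ := hleader u₁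
  obtain ⟨vs₂, hpath₂, -, hlast₂⟩ := hleader u₂
  obtain ⟨δ₁, hδ₁, h₁⟩ := hpath₁.exists_displacement pos hpos hlast₁
  obtain ⟨δ₂, hδ₂, h₂⟩ := hpath₂.exists_displacement pos hpos hlast₂
  refine ⟨δ₂ - δ₁, by omega, ?_⟩
  rw [Int.cast_sub, sub_eq_sub_iff_add_eq_add, ← h₁, h₂, add_comm]

namespace AugView

def rootDegree : AugView → ℕ
  | leaf d => d
  | node cs => cs.length

def firstChild : AugView → AugView
  | node ((_, t) :: _) => t
  | _ => leaf 0

def firstChildPort : AugView → ℕ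
  | node ((q, _) :: _) => q
  | _ => 0

end AugView

theorem rootDegree_augView (PG : PortGraph) (ℓ : ℕ) (v : Fin PG.n) :
    (PG.augView ℓ v).rootDegree = PG.degree v := by
  cases ℓ <;> simp [augView, AugView.rootDegree]

theorem augView_succ_of_degree_ne_zero (PG : PortGraph) (ℓ : ℕ) {v : Fin PG.n}
    (hv : PG.degree v ≠ 0) :
    ∃ cs, PG.augView (ℓ + 1) v =
      AugView.node ((PG.portNum (PG.nbr v 0) v, PG.augView ℓ (PG.nbr v 0)) :: cs) := by
  obtain ⟨d, hd⟩ := Nat.exists_eq_succ_of_ne_zero hv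
  simp only [augView, hd, List.range_succ_eq_map, List.map_cons]
  exact ⟨_, rfl⟩

theorem firstChild_augView (PG : PortGraph) (ℓ : ℕ) {v : Fin PG.n} (hv : PG.degree v ≠ 0) :
    (PG.augView (ℓ + 1) v).firstChild = PG.augView ℓ (PG.nbr v 0) := by
  obtain ⟨cs, hcs⟩ := PG.augView_succ_of_degree_ne_zero ℓ hv
  rw [hcs, AugView.firstChild]

theorem firstChildPort_augView (PG : PortGraph) (ℓ : ℕ) {v : Fin PG.n} (hv : PG.degree v ≠ 0) :
    (PG.augView (ℓ + 1) v).firstChildPort = PG.portNum (PG.nbr v 0) v := by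
  obtain ⟨cs, hcs⟩ := PG.augView_succ_of_degree_ne_zero ℓ hv
  rw [hcs, AugView.firstChildPort]

end PortGraph

namespace DecoratedCycle

open PortGraph

variable {m : ℕ}

instance : Fact (1 < m + 3) := ⟨by omega⟩

theorem zmod_two_ne_zero : (2 : ZMod (m + 3)) ≠ 0 := by
  have h : ((2 : ℕ) : ZMod (m + 3)) ≠ 0 := by
    rw [Ne, ZMod.natCast_eq_zero_iff]
    exact Nat.not_dvd_of_pos_of_lt two_pos (by omega)
  simpa using h

theorem add_one_ne_sub_one (x : ZMod (m + 3)) : x + 1 ≠ x - 1 := by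
  intro h
  apply zmod_two_ne_zero (m := m)
  linear_combination h

theorem ne_add_one_add_one (x : ZMod (m + 3)) : x ≠ x + 1 + 1 := by
  intro h
  apply zmod_two_ne_zero (m := m)
  linear_combination -h

variable (c : ZMod (m + 3) → ℕ)

/-- `⟨x, 0⟩` is the cycle node at position `x`, and `⟨x, k⟩` with `k ≠ 0` are the `c x` leaves
attached to it. -/
abbrev Vertex : Type := Σ x : ZMod (m + 3), Fin (c x + 1)

variable {c}

def hub (x : ZMod (m + 3)) : Vertex c := ⟨x, 0⟩

@[elab_as_elim]
theorem Vertex.hub_or_leaf {motive : Vertex c → Prop} (a : Vertex c)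
    (hub : ∀ x, motive (hub x)) (leaf : ∀ x (k : Fin (c x + 1)), k ≠ 0 → motive ⟨x, k⟩) :
    motive a := by
  obtain ⟨x, k⟩ := a
  obtain rfl | hk := eq_or_ne k 0
  exacts [hub x, leaf x k hk]

theorem eq_hub {a : Vertex c} (ha : (a.2 : ℕ) = 0) : a = hub a.1 := by
  obtain ⟨x, k⟩ := a
  obtain rfl : k = 0 := Fin.ext ha
  rfl

def Adj (a b : Vertex c) : Prop :=
  (a.2 : ℕ) = 0 ∧ (b.2 : ℕ) = 0 ∧ (b.1 = a.1 + 1 ∨ b.1 = a.1 - 1) ∨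
    a.1 = b.1 ∧ ((a.2 : ℕ) = 0 ∧ (b.2 : ℕ) ≠ 0 ∨ (a.2 : ℕ) ≠ 0 ∧ (b.2 : ℕ) = 0)

theorem Adj.symm {a b : Vertex c} : Adj a b → Adj b a := by
  rintro (⟨ha, hb, h | h⟩ | ⟨h, hab | hab⟩)
  · exact Or.inl ⟨hb, ha, Or.inr (by rw [h]; ring)⟩
  · exact Or.inl ⟨hb, ha, Or.inl (by rw [h]; ring)⟩
  · exact Or.inr ⟨h.symm, Or.inr hab.symm⟩
  · exact Or.inr ⟨h.symm, Or.inl hab.symm⟩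

theorem Adj.irrefl {a : Vertex c} : ¬ Adj a a := by
  rintro (⟨-, -, h | h⟩ | ⟨-, ⟨h, h'⟩ | ⟨h, h'⟩⟩)
  · exact one_ne_zero (by linear_combination -h)
  · exact one_ne_zero (by linear_combination h)
  · exact h' h
  · exact h h'

theorem adj_hub_add_one (x : ZMod (m + 3)) : Adj (c := c) (hub x) (hub (x + 1)) :=
  Or.inl ⟨rfl, rfl, Or.inl rfl⟩

theorem adj_hub_sub_one (x : ZMod (m + 3)) : Adj (c := c) (hub x) (hub (x - 1)) :=
  Or.inl ⟨rfl, rfl, Or.inr rfl⟩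

theorem adj_hub_leaf {x : ZMod (m + 3)} {k : Fin (c x + 1)} (hk : k ≠ 0) :
    Adj (hub x) ⟨x, k⟩ :=
  Or.inr ⟨rfl, Or.inl ⟨rfl, Fin.val_ne_zero_iff.mpr hk⟩⟩

theorem adj_hub_iff {x : ZMod (m + 3)} {b : Vertex c} :
    Adj (hub x) b ↔ b = hub (x + 1) ∨ b = hub (x - 1) ∨ b.1 = x ∧ b.2 ≠ 0 := by
  constructor
  · rintro (⟨-, hb, h | h⟩ | ⟨h, ⟨-, hb⟩ | ⟨h', -⟩⟩)
    · exact Or.inl (by rw [eq_hub hb, h]; rfl)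
    · exact Or.inr (Or.inl (by rw [eq_hub hb, h]; rfl))
    · exact Or.inr (Or.inr ⟨h.symm, Fin.val_ne_zero_iff.mp hb⟩)
    · exact absurd rfl h'
  · rintro (rfl | rfl | ⟨h, hb⟩)
    · exact adj_hub_add_one x
    · exact adj_hub_sub_one x
    · obtain ⟨y, k⟩ := b
      subst h
      exact adj_hub_leaf hb

theorem adj_leaf_iff {x : ZMod (m + 3)} {k : Fin (c x + 1)} (hk : k ≠ 0) {b : Vertex c} :
    Adj ⟨x, k⟩ b ↔ b = hub x := by
  have hk' := Fin.val_ne_zero_iff.mpr hk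
  constructor
  · rintro (⟨h, -⟩ | ⟨h, ⟨h', -⟩ | ⟨-, hb⟩⟩)
    · exact absurd h hk'
    · exact absurd h' hk'
    · rw [eq_hub hb, ← h]
  · rintro rfl
    exact (adj_hub_leaf hk).symm

variable (c) in
def graph : SimpleGraph (Vertex c) where
  Adj := Adj
  symm := ⟨fun _ _ => Adj.symm⟩
  loopless := ⟨fun _ => Adj.irrefl⟩

theorem graph_connected : (graph c).Connected := by
  have hhub : ∀ n : ℕ, (graph c).Reachable (hub 0) (hub n) := by
    intro n
    induction n with
    | zero => simp
    | succ n ih =>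
      exact ih.trans (by simpa using SimpleGraph.Adj.reachable (G := graph c) (adj_hub_add_one _))
  have hall : ∀ a : Vertex c, (graph c).Reachable (hub 0) a := by
    intro a
    have hx : ∀ x, (graph c).Reachable (hub 0) (hub x) := fun x => by simpa using hhub x.val
    cases a using Vertex.hub_or_leaf with
    | hub x => exact hx x
    | leaf x k hk =>
      exact (hx x).trans (SimpleGraph.Adj.reachable (G := graph c) (adj_hub_leaf hk))
  exact ⟨fun a b => (hall a).symm.trans (hall b)⟩

def port (a b : Vertex c) : ℕ :=
  if (a.2 : ℕ) = 0 then if (b.2 : ℕ) = 0 then if b.1 = a.1 + 1 then 0 else 1 else b.2 + 1 else 0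

def deg (a : Vertex c) : ℕ := if (a.2 : ℕ) = 0 then c a.1 + 2 else 1

theorem port_hub_add_one (x : ZMod (m + 3)) : port (c := c) (hub x) (hub (x + 1)) = 0 := by
  simp [port, hub]

theorem port_hub_sub_one (x : ZMod (m + 3)) : port (c := c) (hub x) (hub (x - 1)) = 1 := by
  simp [port, hub, (add_one_ne_sub_one x).symm]

theorem port_add_one_hub (x : ZMod (m + 3)) : port (c := c) (hub (x + 1)) (hub x) = 1 := by
  simp [port, hub, ne_add_one_add_one x]

theorem port_sub_one_hub (x : ZMod (m + 3)) : port (c := c) (hub (x - 1)) (hub x) = 0 := by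
  simp [port, hub]

theorem port_hub_leaf {x : ZMod (m + 3)} {k : Fin (c x + 1)} (hk : k ≠ 0) :
    port (hub x) ⟨x, k⟩ = k + 1 := by
  simp [port, hub, hk]

theorem port_leaf {x : ZMod (m + 3)} {k : Fin (c x + 1)} (hk : k ≠ 0) (b : Vertex c) :
    port ⟨x, k⟩ b = 0 := by
  simp [port, hk]

theorem deg_hub (x : ZMod (m + 3)) : deg (c := c) (hub x) = c x + 2 := by
  simp [deg, hub]

theorem deg_leaf {x : ZMod (m + 3)} {k : Fin (c x + 1)} (hk : k ≠ 0) : deg ⟨x, k⟩ = 1 := by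
  simp [deg, hk]

def hubNbr (x : ZMod (m + 3)) : Fin (c x + 2) → Vertex c :=
  Fin.cases (hub (x + 1)) (Fin.cases (hub (x - 1)) fun k => ⟨x, k.succ⟩)

theorem adj_hubNbr (x : ZMod (m + 3)) (p : Fin (c x + 2)) : Adj (hub x) (hubNbr x p) := by
  rw [adj_hub_iff]
  induction p using Fin.cases with
  | zero => exact Or.inl rfl
  | succ p =>
    induction p using Fin.cases with
    | zero => exact Or.inr (Or.inl rfl)
    | succ k => exact Or.inr (Or.inr ⟨rfl, Fin.succ_ne_zero k⟩)

theorem port_hubNbr (x : ZMod (m + 3)) (p : Fin (c x + 2)) : port (hub x) (hubNbr x p) = p := by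
  induction p using Fin.cases with
  | zero => exact port_hub_add_one x
  | succ p =>
    induction p using Fin.cases with
    | zero => exact port_hub_sub_one x
    | succ k => simp [hubNbr, port_hub_leaf (Fin.succ_ne_zero k)]

theorem port_lt {a b : Vertex c} (h : Adj a b) : port a b < deg a := by
  cases a using Vertex.hub_or_leaf with
  | hub x =>
    rcases adj_hub_iff.mp h with rfl | rfl | ⟨rfl, hb⟩
    · simp [port_hub_add_one, deg_hub]
    · simp [port_hub_sub_one, deg_hub]
    · rw [port_hub_leaf hb, deg_hub]
      have := b.2.isLt
      omega
  | leaf x k hk => simp [port_leaf hk, deg_leaf hk]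

theorem hubNbr_port {x : ZMod (m + 3)} {b : Vertex c} (h : Adj (hub x) b) :
    hubNbr x ⟨port (hub x) b, port_lt h⟩ = b := by
  rcases adj_hub_iff.mp h with rfl | rfl | ⟨rfl, hb⟩
  · simp only [port_hub_add_one]
    rfl
  · simp only [port_hub_sub_one]
    rfl
  · obtain ⟨y, l⟩ := b
    dsimp only at hb ⊢
    obtain ⟨k, rfl⟩ := Fin.exists_succ_eq.mpr hb
    simp only [port_hub_leaf hb]
    rfl

def hubNbrEquiv (x : ZMod (m + 3)) : {b : Vertex c // Adj (hub x) b} ≃ Fin (c x + 2) where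
  toFun b := ⟨port (hub x) b, port_lt b.2⟩
  invFun p := ⟨hubNbr x p, adj_hubNbr x p⟩
  left_inv b := Subtype.ext (hubNbr_port b.2)
  right_inv p := Fin.ext (port_hubNbr x p)

theorem card_adj (a : Vertex c) : Nat.card {b // Adj a b} = deg a := by
  cases a using Vertex.hub_or_leaf with
  | hub x =>
    rw [Nat.card_congr (hubNbrEquiv x), Nat.card_eq_fintype_card, Fintype.card_fin, deg_hub]
  | leaf x k hk =>
    rw [deg_leaf hk, Nat.card_eq_one_iff_exists]
    exact ⟨⟨hub x, (adj_leaf_iff hk).mpr rfl⟩, fun b => Subtype.ext ((adj_leaf_iff hk).mp b.2)⟩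

theorem port_inj {a u w : Vertex c} (hu : Adj a u) (hw : Adj a w) (h : port a u = port a w) :
    u = w := by
  cases a using Vertex.hub_or_leaf with
  | hub x =>
    rw [← hubNbr_port hu, ← hubNbr_port hw]
    simp only [h]
  | leaf x k hk => rw [(adj_leaf_iff hk).mp hu, (adj_leaf_iff hk).mp hw]

variable (c) in
noncomputable def toPortGraph : PortGraph where
  n := Fintype.card (Vertex c)
  three_le := by
    have := Fintype.card_le_of_injective (hub (c := c)) fun _ _ h => congrArg Sigma.fst h
    rw [ZMod.card] at this
    omega
  G := (graph c).comap (Fintype.equivFin (Vertex c)).symm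
  conn := (SimpleGraph.Iso.comap _ _).connected_iff.mpr graph_connected
  portNum v w := port ((Fintype.equivFin _).symm v) ((Fintype.equivFin _).symm w)
  port_lt v u h := (port_lt h).trans_eq <| (card_adj _).symm.trans
    (Nat.card_congr ((Fintype.equivFin _).symm.subtypeEquiv fun _ => Iff.rfl)).symm
  port_inj v u w hu hw h := (Fintype.equivFin _).symm.injective (port_inj hu hw h)

noncomputable def toFin (a : Vertex c) : Fin (toPortGraph c).n := Fintype.equivFin _ a

noncomputable def position (v : Fin (toPortGraph c).n) : ZMod (m + 3) :=
  ((Fintype.equivFin _).symm v).1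

theorem exists_toFin (v : Fin (toPortGraph c).n) : ∃ a, toFin a = v :=
  (Fintype.equivFin _).surjective v

theorem position_toFin (a : Vertex c) : position (toFin a) = a.1 := by
  simp [position, toFin]

theorem adj_toFin {a b : Vertex c} : (toPortGraph c).G.Adj (toFin a) (toFin b) ↔ Adj a b := by
  simp [toPortGraph, toFin, graph]

theorem portNum_toFin (a b : Vertex c) :
    (toPortGraph c).portNum (toFin a) (toFin b) = port a b := by
  simp [toPortGraph, toFin]

theorem degree_toFin (a : Vertex c) : (toPortGraph c).degree (toFin a) = deg a := by
  rw [PortGraph.degree, ← card_adj]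
  exact Nat.card_congr
    ((Fintype.equivFin _).symm.subtypeEquiv fun _ => by simp [toPortGraph, toFin, graph])

theorem nbr_toFin {a b : Vertex c} (h : Adj a b) :
    (toPortGraph c).nbr (toFin a) (port a b) = toFin b := by
  rw [← portNum_toFin]
  exact nbr_portNum (adj_toFin.mpr h)

theorem position_adj {v u : Fin (toPortGraph c).n} (h : (toPortGraph c).G.Adj v u) :
    ∃ e : ℤ, e.natAbs ≤ 1 ∧ position u = position v + e := by
  obtain ⟨a, rfl⟩ := exists_toFin v
  obtain ⟨b, rfl⟩ := exists_toFin u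
  rw [position_toFin, position_toFin]
  rcases adj_toFin.mp h with ⟨-, -, h | h⟩ | ⟨h, -⟩
  · exact ⟨1, le_rfl, by rw [h, Int.cast_one]⟩
  · exact ⟨-1, le_rfl, by rw [h, Int.cast_neg, Int.cast_one, sub_eq_add_neg]⟩
  · exact ⟨0, zero_le_one, by rw [h, Int.cast_zero, add_zero]⟩

theorem nbr_hub (x : ZMod (m + 3)) {p : ℕ} (hp : p < c x + 2) :
    (toPortGraph c).nbr (toFin (hub x)) p = toFin (hubNbr x ⟨p, hp⟩) := by
  have := nbr_toFin (adj_hubNbr x ⟨p, hp⟩)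
  rwa [port_hubNbr] at this

theorem nbr_hub_zero (x : ZMod (m + 3)) :
    (toPortGraph c).nbr (toFin (hub x)) 0 = toFin (hub (x + 1)) :=
  nbr_hub x (Nat.succ_pos _)

theorem nbr_leaf {x : ZMod (m + 3)} {k : Fin (c x + 1)} (hk : k ≠ 0) :
    (toPortGraph c).nbr (toFin ⟨x, k⟩) 0 = toFin (hub x) := by
  rw [← port_leaf hk (hub x)]
  exact nbr_toFin ((adj_leaf_iff hk).mpr rfl)

theorem degree_hub_ne_zero (x : ZMod (m + 3)) : (toPortGraph c).degree (toFin (hub x)) ≠ 0 := by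
  simp [degree_toFin, deg_hub]

theorem iterate_firstChild_augView_hub {s ℓ : ℕ} (hs : s ≤ ℓ) (x : ZMod (m + 3)) :
    AugView.firstChild^[s] ((toPortGraph c).augView ℓ (toFin (hub x))) =
      (toPortGraph c).augView (ℓ - s) (toFin (hub (x + s))) := by
  induction s generalizing ℓ x with
  | zero => simp
  | succ s ih =>
    obtain ⟨ℓ, rfl⟩ := Nat.exists_eq_add_of_le' (Nat.one_le_of_lt hs)
    rw [Function.iterate_succ_apply, firstChild_augView _ _ (degree_hub_ne_zero x),
      nbr_hub_zero x, ih (by omega), Nat.cast_succ, add_assoc, add_comm 1,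
      Nat.add_sub_add_right]

theorem hub_eq_of_augView_eq {κ : ℕ} {x₀ : ZMod (m + 3)} (hc : ∀ x, c x = κ ↔ x = x₀)
    {ℓ : ℕ} (hℓ : m + 2 ≤ ℓ) {x y : ZMod (m + 3)}
    (h : (toPortGraph c).augView ℓ (toFin (hub x)) = (toPortGraph c).augView ℓ (toFin (hub y))) :
    x = y := by
  set s := (x₀ - x).val
  have hs : s ≤ ℓ := by have := ZMod.val_lt (x₀ - x); omega
  have hx : x + s = x₀ := by simp [s]
  have hdeg := congrArg (fun t => (AugView.firstChild^[s] t).rootDegree) h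
  simp only [iterate_firstChild_augView_hub hs, rootDegree_augView, degree_toFin, deg_hub,
    hx] at hdeg
  have hy : y + s = x₀ := (hc _).mp (by have := (hc x₀).mpr rfl; omega)
  exact add_right_cancel (hx.trans hy.symm)

theorem feasible_of_existsUnique {κ : ℕ} {x₀ : ZMod (m + 3)} (hc : ∀ x, c x = κ ↔ x = x₀) :
    (toPortGraph c).Feasible := by
  refine ⟨m + 3, fun v w h => ?_⟩
  obtain ⟨a, rfl⟩ := exists_toFin v
  obtain ⟨b, rfl⟩ := exists_toFin w
  have hdeg := congrArg AugView.rootDegree h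
  simp only [rootDegree_augView, degree_toFin] at hdeg
  cases a using Vertex.hub_or_leaf with
  | hub x =>
    cases b using Vertex.hub_or_leaf with
    | hub y => rw [hub_eq_of_augView_eq hc (by omega) h]
    | leaf y l hl => simp [deg_hub, deg_leaf hl] at hdeg
  | leaf x k hk =>
    cases b using Vertex.hub_or_leaf with
    | hub y => simp [deg_hub, deg_leaf hk] at hdeg
    | leaf y l hl =>
      have hdeg' : ∀ {z} {j : Fin (c z + 1)}, j ≠ 0 →
          (toPortGraph c).degree (toFin ⟨z, j⟩) ≠ 0 :=
        fun hj => by simp [degree_toFin, deg_leaf hj]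
      have hchild := congrArg AugView.firstChild h
      have hport := congrArg AugView.firstChildPort h
      rw [firstChild_augView _ _ (hdeg' hk), firstChild_augView _ _ (hdeg' hl), nbr_leaf hk,
        nbr_leaf hl] at hchild
      obtain rfl := hub_eq_of_augView_eq hc (le_refl _) hchild
      rw [firstChildPort_augView _ _ (hdeg' hk), firstChildPort_augView _ _ (hdeg' hl),
        nbr_leaf hk, nbr_leaf hl, portNum_toFin, portNum_toFin, port_hub_leaf hk,
        port_hub_leaf hl] at hport
      rw [Fin.ext (by omega : (k : ℕ) = l)]

variable {m' : ℕ} {c' : ZMod (m' + 3) → ℕ}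

def LocallyAgree (c : ZMod (m + 3) → ℕ) (c' : ZMod (m' + 3) → ℕ) (k : ℕ) (x : ZMod (m + 3))
    (x' : ZMod (m' + 3)) : Prop :=
  ∀ d ≤ 2 * k, c (x - k + d) = c' (x' - k + d)

namespace LocallyAgree

variable {k : ℕ} {x : ZMod (m + 3)} {x' : ZMod (m' + 3)}

theorem apply_eq (h : LocallyAgree c c' k x x') : c x = c' x' := by
  simpa using h k (by omega)

theorem of_succ (h : LocallyAgree c c' (k + 1) x x') : LocallyAgree c c' k x x' := by
  intro d hd
  convert h (d + 1) (by omega) using 2 <;> push_cast <;> ring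

theorem add_one (h : LocallyAgree c c' (k + 1) x x') :
    LocallyAgree c c' k (x + 1) (x' + 1) := by
  intro d hd
  convert h (d + 2) (by omega) using 2 <;> push_cast <;> ring

theorem sub_one (h : LocallyAgree c c' (k + 1) x x') :
    LocallyAgree c c' k (x - 1) (x' - 1) := by
  intro d hd
  convert h d (by omega) using 2 <;> push_cast <;> ring

end LocallyAgree

theorem augView_hub_eq_of_locallyAgree {k : ℕ} {x : ZMod (m + 3)} {x' : ZMod (m' + 3)}
    (h : LocallyAgree c c' k x x') :
    (toPortGraph c).augView k (toFin (hub x)) = (toPortGraph c').augView k (toFin (hub x')) := by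
  refine augView_eq_of_bisim (fun k v v' => ∃ a a', v = toFin a ∧ v' = toFin a' ∧
      (a.2 : ℕ) = a'.2 ∧ LocallyAgree c c' k a.1 a'.1) ?_ ?_ k _ _
    ⟨hub x, hub x', rfl, rfl, rfl, h⟩
  · rintro k _ _ ⟨a, a', rfl, rfl, hval, hagree⟩
    simp only [degree_toFin, deg, hval, hagree.apply_eq]
  rintro k _ _ ⟨a, a', rfl, rfl, hval, hagree⟩ p hp
  rw [degree_toFin] at hp
  cases a using Vertex.hub_or_leaf with
  | hub x =>
    cases a' using Vertex.hub_or_leaf with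
    | leaf x' k' hk' => exact absurd hval.symm (Fin.val_ne_zero_iff.mpr hk')
    | hub x' =>
      have hc := hagree.apply_eq
      rw [deg_hub] at hp
      rw [nbr_hub x hp, nbr_hub x' (hc ▸ hp)]
      rcases p with _ | _ | q
      · refine ⟨?_, hub (x + 1), hub (x' + 1), rfl, rfl, rfl, hagree.add_one⟩
        rw [portNum_toFin, portNum_toFin]
        exact (port_add_one_hub x).trans (port_add_one_hub x').symm
      · refine ⟨?_, hub (x - 1), hub (x' - 1), rfl, rfl, rfl, hagree.sub_one⟩
        rw [portNum_toFin, portNum_toFin]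
        exact (port_sub_one_hub x).trans (port_sub_one_hub x').symm
      · refine ⟨?_, _, _, rfl, rfl, rfl, hagree.of_succ⟩
        rw [portNum_toFin, portNum_toFin]
        exact (port_leaf (Fin.succ_ne_zero _) _).trans (port_leaf (Fin.succ_ne_zero _) _).symm
  | leaf x l hl =>
    cases a' using Vertex.hub_or_leaf with
    | hub x' => exact absurd hval (Fin.val_ne_zero_iff.mpr hl)
    | leaf x' l' hl' =>
      obtain rfl : p = 0 := by rw [deg_leaf hl] at hp; omega
      rw [nbr_leaf hl, nbr_leaf hl', portNum_toFin, portNum_toFin, port_hub_leaf hl,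
        port_hub_leaf hl']
      exact ⟨by rw [hval], hub x, hub x', rfl, rfl, rfl, hagree.of_succ⟩

end DecoratedCycle

theorem _root_.List.getD_flatten_replicate {α : Type*} (l : List α) (d : α) {n i : ℕ}
    (hi : i < n * l.length) :
    (List.replicate n l).flatten.getD i d = l.getD (i % l.length) d := by
  induction n generalizing i with
  | zero => simp at hi
  | succ n ih =>
    rw [List.replicate_succ, List.flatten_cons]
    by_cases h : i < l.length
    · rw [List.getD_append _ _ _ _ h, Nat.mod_eq_of_lt h]
    · push Not at h
      rw [List.getD_append_right _ _ _ _ h, ih (by rw [Nat.succ_mul] at hi; omega),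
        Nat.mod_eq_sub_mod h]

def pattern : ℕ → List ℕ
  | j => (0 :: 0 :: (List.range j).attach.flatMap fun i =>
      (List.replicate j (pattern i.1)).flatten) ++ [j + 1]
  decreasing_by exact List.mem_range.mp i.2

theorem pattern_eq (j : ℕ) : pattern j = (0 :: 0 :: (List.range j).flatMap fun i =>
    (List.replicate j (pattern i)).flatten) ++ [j + 1] := by
  rw [pattern]
  congr 3
  simp

theorem three_le_length_pattern (j : ℕ) : 3 ≤ (pattern j).length := by
  rw [pattern_eq]
  simp

theorem le_of_mem_pattern {j a : ℕ} (h : a ∈ pattern j) : a ≤ j + 1 := by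
  induction j using Nat.strong_induction_on generalizing a with
  | _ j ih =>
    rw [pattern_eq] at h
    simp only [List.mem_append, List.mem_cons, List.mem_flatMap, List.mem_range,
      List.mem_flatten, List.mem_replicate] at h
    rcases h with (rfl | rfl | ⟨i, hi, l, ⟨-, rfl⟩, hl⟩) | ⟨rfl | h⟩
    · omega
    · omega
    · have := ih i hi hl; omega
    · rfl
    · simp at h

theorem getD_pattern_eq_succ_iff {j n : ℕ} (hn : n < (pattern j).length) :
    (pattern j).getD n 0 = j + 1 ↔ n = (pattern j).length - 1 := by
  have hpre : ∀ a ∈ 0 :: 0 :: (List.range j).flatMap fun i =>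
      (List.replicate j (pattern i)).flatten, a ≤ j := by
    simp only [List.mem_cons, List.mem_flatMap, List.mem_range, List.mem_flatten,
      List.mem_replicate]
    rintro a (rfl | rfl | ⟨i, hi, l, ⟨-, rfl⟩, hl⟩)
    · omega
    · omega
    · have := le_of_mem_pattern hl; omega
  rw [pattern_eq] at hn ⊢
  rw [List.length_append, List.length_singleton, Nat.add_sub_cancel]
  rcases Nat.lt_succ_iff_lt_or_eq.mp (List.length_append ▸ hn) with h | rfl
  · rw [List.getD_append _ _ _ _ h, List.getD_eq_getElem _ _ h]
    have := hpre _ (List.getElem_mem h)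
    omega
  · simp

theorem exists_pattern_eq_append_run {i j : ℕ} (hij : i < j) :
    ∃ pre post : List ℕ, pattern j = pre ++ (List.replicate j (pattern i)).flatten ++ post ∧
      post ≠ [] := by
  obtain ⟨k, rfl⟩ := Nat.exists_eq_add_of_lt hij
  rw [show i + k + 1 = i + 1 + k by omega]
  set run := fun i' => (List.replicate (i + 1 + k) (pattern i')).flatten
  refine ⟨0 :: 0 :: (List.range i).flatMap run,
    ((List.range k).map (i + 1 + ·)).flatMap run ++ [i + 1 + k + 1], ?_, by simp⟩
  rw [pattern_eq, List.range_add, List.range_succ]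
  simp only [List.flatMap_append, List.flatMap_cons, List.cons_append,
    List.append_assoc, List.nil_append, run]

open DecoratedCycle

def decoration (w : List ℕ) (m : ℕ) (x : ZMod (m + 3)) : ℕ := w.getD x.val 0

theorem decoration_natCast {w : List ℕ} {m : ℕ} (hw : w.length = m + 3) (n : ℕ) :
    decoration w m n = w.getD (n % w.length) 0 := by
  rw [decoration, ZMod.val_natCast, hw]

noncomputable abbrev family (j : ℕ) : PortGraph :=
  toPortGraph (decoration (pattern j) ((pattern j).length - 3))

theorem length_pattern_eq (j : ℕ) : (pattern j).length = (pattern j).length - 3 + 3 :=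
  (Nat.sub_add_cancel (three_le_length_pattern j)).symm

theorem family_feasible (j : ℕ) : (family j).Feasible := by
  refine feasible_of_existsUnique (κ := j + 1) (x₀ := ((pattern j).length - 1 : ℕ)) fun x => ?_
  have hlen := length_pattern_eq j
  have hx := ZMod.val_lt x
  rw [decoration, getD_pattern_eq_succ_iff (by omega)]
  constructor
  · intro h
    rw [← h, ZMod.natCast_zmod_val]
  · rintro rfl
    rw [ZMod.val_natCast, Nat.mod_eq_of_lt (by omega)]

theorem exists_augView_family_eq {i j : ℕ} (hij : i < j) :
    ∃ S, S + j * (pattern i).length < (pattern j).length ∧ ∀ r s, s ≤ r → r + s < j →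
      (family j).augView s (toFin (hub ((S + r * (pattern i).length : ℕ) : ZMod _))) =
        (family i).augView s (toFin (hub 0)) := by
  obtain ⟨pre, post, hj, hpost⟩ := exists_pattern_eq_append_run hij
  have hL := three_le_length_pattern i
  have hlen : (pattern j).length = pre.length + j * (pattern i).length + post.length := by
    simp [hj, Nat.add_assoc]
  refine ⟨pre.length, by have := List.length_pos_of_ne_nil hpost; omega, fun r s hsr hrs => ?_⟩
  have hzero : ((r * (pattern i).length : ℕ) : ZMod ((pattern i).length - 3 + 3)) = 0 := by
    rw [ZMod.natCast_eq_zero_iff, ← length_pattern_eq]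
    exact Dvd.intro_left r rfl
  rw [← hzero]
  apply augView_hub_eq_of_locallyAgree
  intro d hd
  have hsL : s ≤ r * (pattern i).length := le_trans hsr (Nat.le_mul_of_pos_right r (by omega))
  have hn : r * (pattern i).length - s + d < j * (pattern i).length := by
    have : (r + s + 1) * (pattern i).length ≤ j * (pattern i).length :=
      Nat.mul_le_mul_right _ hrs
    have := Nat.le_mul_of_pos_right s (show 0 < (pattern i).length by omega)
    have : (r + s + 1) * (pattern i).length =
      r * (pattern i).length + s * (pattern i).length + (pattern i).length := by ring
    omega
  have hcast : ∀ (N n : ℕ), s ≤ n → ((n : ℕ) : ZMod N) - s + d = ((n - s + d : ℕ) : ZMod N) :=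
    fun N n hn => by push_cast [Nat.cast_sub hn]; ring
  rw [hcast _ _ (by omega), hcast _ _ hsL,
    show pre.length + r * (pattern i).length - s + d = pre.length + (r * (pattern i).length - s + d)
      by omega,
    decoration_natCast (length_pattern_eq j), decoration_natCast (length_pattern_eq i),
    Nat.mod_eq_of_lt (by omega), hj, List.getD_append _ _ _ _ (by simp; omega),
    List.getD_append_right _ _ _ _ (by omega), Nat.add_sub_cancel_left,
    List.getD_flatten_replicate _ _ hn]

/-- No leader election algorithm using advice of size at most `b` succeeds on all
feasible port-numbered graphs, regardless of the allocated time. Here `f` maps the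
advice and the current augmented truncated view either to `none` ("continue") or to an
output sequence of port numbers; `t v` is the first round at which node `v` stops. -/
theorem no_constant_advice (b : ℕ) :
    ¬ ∃ (A : PortGraph → List Bool)
        (f : List Bool → PortGraph.AugView → Option (List ℕ)),
      (∀ PG : PortGraph, PG.Feasible → (A PG).length ≤ b) ∧
      (∀ PG : PortGraph, PG.Feasible →
        ∃ (t : Fin PG.n → ℕ) (P : Fin PG.n → List ℕ),
          (∀ v : Fin PG.n, f (A PG) (PG.augView (t v) v) = some (P v)) ∧
          (∀ v : Fin PG.n, ∀ s : ℕ, s < t v → f (A PG) (PG.augView s v) = none) ∧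
          PG.IsLeaderElection P) := by
  rintro ⟨A, f, hlen, hrun⟩
  obtain ⟨a, hJ⟩ := exists_infinite_fiber_of_length_le (fun j => A (family j))
    fun j => hlen _ (family_feasible j)
  obtain ⟨i, hi : A (family i) = a⟩ := hJ.nonempty
  obtain ⟨t, P, hstop, hwait, -⟩ := hrun _ (family_feasible i)
  set v : Fin (family i).n := toFin (hub 0)
  set K := (P v).length
  obtain ⟨j, hj : A (family j) = a, hij⟩ := hJ.exists_gt (i + 2 * t v + 4 * K + 2)
  obtain ⟨t', P', hstop', hwait', hP'⟩ := hrun _ (family_feasible j)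
  obtain ⟨S, hS, hview⟩ := exists_augView_family_eq (show i < j by omega)
  set u : ℕ → Fin (family j).n := fun r => toFin (hub ((S + r * (pattern i).length : ℕ) : ZMod _))
  have hout : ∀ r, t v ≤ r → r + t v < j → P' (u r) = P v := fun r h₁ h₂ =>
    (first_some_unique (x := fun s => f (A (family i)) ((family i).augView s v))
      (y := fun s => f (A (family j)) ((family j).augView s (u r)))
      (hstop v) (hwait v) (hstop' (u r)) (hwait' (u r))
      fun s hs => by simp only [hj, ← hi, u, v, hview r s (by omega) (by omega)]).2
  have hdist : position (u (t v + 2 * K + 1)) - position (u (t v)) =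
      (((2 * K + 1) * (pattern i).length : ℕ) : ZMod _) := by
    simp only [u, position_toFin, hub]
    push_cast
    ring
  obtain ⟨δ, hδ, hpos⟩ := hP'.exists_sub_eq position (fun _ _ => position_adj)
    (u (t v + 2 * K + 1)) (u (t v))
  rw [hout _ (by omega) (by omega), hout _ le_rfl (by omega)] at hδ
  have hL := three_le_length_pattern i
  refine ZMod.natCast_ne_intCast_of_natAbs_lt (by nlinarith) ?_ (hdist ▸ hpos)
  rw [← length_pattern_eq]
  nlinarith

end Election
end
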